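/- Let (A,∘,B) be a finite-dimensional quadratic Novikov algebra, J a nonzero isotropic ideal of (A,∘) (i.e., B(J,J)=0), V a vector space complement of J^⊥ in A (A = J^⊥ ⊕ V), and S = J ⊕ V. Then B restricted to S × S is nondegenerate, and A = J ⊕ S^⊥ ⊕ V as vector spaces. -/

import Mathlib

/-!
By the modular law, `J ≤ J^⊥` and `V ⊓ J^⊥ = ⊥` give `(J ⊔ V) ⊓ (J ⊔ V)^⊥ = J ⊓ V^⊥`,
which lies in `J^⊥^⊥ ⊓ V^⊥ = (J^⊥ ⊔ V)^⊥ = A^⊥ = 0`. In finite dimension this makes `S^⊥` a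
complement of `S = J ⊔ V`, and `J ⊓ V ≤ J^⊥ ⊓ V = 0` splits `S` further.
-/

lemma iSupIndep_fin_three_of_disjoint_sup {α : Type*} [CompleteLattice α] [IsModularLattice α]
    {a b c : α} (hab : Disjoint a b) (habc : Disjoint (a ⊔ b) c) : iSupIndep ![a, c, b] := by
  refine iSupIndep_fin_three.mpr ⟨?_, ?_, ?_⟩ <;>
    simp only [Matrix.cons_val_zero, Matrix.cons_val_one, Matrix.cons_val_two, Matrix.head_cons,
      Matrix.tail_cons]
  · exact sup_comm b c ▸ hab.disjoint_sup_right_of_disjoint_sup_left habc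
  · exact sup_comm a b ▸ habc.symm
  · exact hab.symm.disjoint_sup_right_of_disjoint_sup_left (sup_comm a b ▸ habc)

theorem DirectSum.isInternal_submodule_fin_three_of_isCompl_sup {R M : Type*} [Ring R]
    [AddCommGroup M] [Module R M] {p q r : Submodule R M} (hpq : Disjoint p q)
    (h : IsCompl (p ⊔ q) r) : DirectSum.IsInternal ![p, r, q] := by
  refine (DirectSum.isInternal_submodule_iff_iSupIndep_and_iSup_eq_top _).mpr
    ⟨iSupIndep_fin_three_of_disjoint_sup hpq h.disjoint, ?_⟩
  simpa [sup_right_comm p q r] using h.sup_eq_top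

namespace LinearMap.BilinForm

variable {R M : Type*} [CommRing R] [AddCommGroup M] [Module R M] {B : LinearMap.BilinForm R M}

theorem orthogonal_sup (N L : Submodule R M) :
    B.orthogonal (N ⊔ L) = B.orthogonal N ⊓ B.orthogonal L := by
  refine le_antisymm (le_inf (orthogonal_le le_sup_left) (orthogonal_le le_sup_right)) ?_
  rintro x ⟨hN, hL⟩
  have hle : N ⊔ L ≤ LinearMap.ker (B.flip x) :=
    sup_le (fun n hn => hN n hn) (fun l hl => hL l hl)
  exact fun y hy => hle hy

theorem disjoint_sup_orthogonal_sup_of_le_orthogonal (hB : B.IsRefl) (hB' : B.SeparatingLeft)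
    {J V : Submodule R M} (hJ : J ≤ B.orthogonal J) (hV : IsCompl (B.orthogonal J) V) :
    Disjoint (J ⊔ V) (B.orthogonal (J ⊔ V)) := by
  rw [disjoint_iff, orthogonal_sup, ← inf_assoc, sup_inf_assoc_of_le V hJ, inf_comm V,
    hV.inf_eq_bot, sup_bot_eq, eq_bot_iff]
  calc J ⊓ B.orthogonal V ≤ B.orthogonal (B.orthogonal J) ⊓ B.orthogonal V :=
        inf_le_inf_right _ (le_orthogonal_orthogonal hB)
    _ = B.orthogonal ⊤ := by rw [← orthogonal_sup, hV.sup_eq_top]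
    _ = ⊥ := by rw [orthogonal_top_eq_ker hB, LinearMap.separatingLeft_iff_ker_eq_bot.mp hB']

end LinearMap.BilinForm

theorem quadratic_novikov_isotropic_triple_decomposition
    {k A : Type*} [Field k] [AddCommGroup A] [Module k A]
    [FiniteDimensional k A]
    (B : LinearMap.BilinForm k A)
    (hsym : ∀ a b, B a b = B b a)
    (hnd : ∀ a, (∀ b, B a b = 0) → a = 0)
    (J : Submodule k A)
    (hJiso : ∀ x ∈ J, ∀ y ∈ J, B x y = 0)
    (V : Submodule k A) (hV : IsCompl (B.orthogonal J) V)
    (S : Submodule k A) (hS : S = J ⊔ V) :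
    (∀ x ∈ S, (∀ y ∈ S, B x y = 0) → x = 0) ∧
    DirectSum.IsInternal (![J, B.orthogonal S, V] : Fin 3 → Submodule k A) := by
  subst hS
  have hrefl : B.IsRefl := fun a b hab => hsym a b ▸ hab
  have hJ : J ≤ B.orthogonal J := fun x hx y hy => hJiso y hy x hx
  have hdisj := LinearMap.BilinForm.disjoint_sup_orthogonal_sup_of_le_orthogonal hrefl hnd hJ hV
  refine ⟨fun x hx hxS => hdisj.le_bot ⟨hx, fun y hy => (hsym y x).trans (hxS y hy)⟩, ?_⟩
  exact DirectSum.isInternal_submodule_fin_three_of_isCompl_sup (hV.disjoint.mono_left hJ)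
    ((LinearMap.BilinForm.isCompl_orthogonal_iff_disjoint hrefl).mpr hdisj)
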